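/- arXiv:2205.09432 — 2 statements merged into one kernel-verified Lean document; each statement's English description precedes it below -/
import Mathlib

section
/- Let K₁, …, K_w be smooth operator fields on an open set U ⊆ ℝⁿ which commute pairwise (K_α(x) ∘ K_β(x) = K_β(x) ∘ K_α(x) for all x ∈ U and all α, β), each satisfying the spectral regularity assumption, and each satisfying τ⁽ˡ⁾_{K_α}(X,Y)(x) = 0 for all smooth vector fields X, Y and all x ∈ U, for a common integer l ≥ 1. For each α choose one generalized eigen-distribution D^{(α)} of K_α, i.e. D^{(α)}(x) = ker((K_α(x) − λ^{(α)}(x)·Id)^{ρ^{(α)}}) for one of the eigenvalue functions λ^{(α)} of K_α with Riesz index ρ^{(α)}. Then the intersection distribution x ↦ D^{(1)}(x) ∩ ⋯ ∩ D^{(w)}(x) is involutive. -/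
noncomputable section

/-- Points of ℝⁿ, modeled as `Fin n → ℝ`. -/
abbrev Vec (n : ℕ) := Fin n → ℝ

/-- Vector fields on (an open subset of) ℝⁿ. -/
abbrev VF (n : ℕ) := Vec n → Vec n

/-- Operator fields: smooth (1,1)-tensor fields, i.e. maps U → (ℝⁿ →L[ℝ] ℝⁿ). -/
abbrev OpField (n : ℕ) := Vec n → (Vec n →L[ℝ] Vec n)

/-- Lie bracket of vector fields: [V,W](x) = DW(x)(V(x)) − DV(x)(W(x)). -/
noncomputable def lieBracket {n : ℕ} (V W : VF n) : VF n :=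
  fun x => fderiv ℝ W x (V x) - fderiv ℝ V x (W x)

/-- Action of an operator field on a vector field: (A V)(x) = A(x)(V(x)). -/
noncomputable def opApp {n : ℕ} (A : OpField n) (V : VF n) : VF n := fun x => A x (V x)

/-- Generalized Nijenhuis torsion of level m:
τ⁽⁰⁾_A(V,W) = [V,W] and
τ⁽ᵐ⁾_A(V,W) = A²τ⁽ᵐ⁻¹⁾_A(V,W) + τ⁽ᵐ⁻¹⁾_A(AV,AW) − A(τ⁽ᵐ⁻¹⁾_A(V,AW) + τ⁽ᵐ⁻¹⁾_A(AV,W)).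
Level 1 is the Nijenhuis torsion, level 2 the Haantjes torsion. -/
noncomputable def genTorsion {n : ℕ} (A : OpField n) : ℕ → VF n → VF n → VF n
  | 0, V, W => lieBracket V W
  | (m+1), V, W => fun x =>
      A x (A x (genTorsion A m V W x))
      + genTorsion A m (opApp A V) (opApp A W) x
      - A x (genTorsion A m V (opApp A W) x + genTorsion A m (opApp A V) W x)

/-- The generalized eigen-distribution `ker ((A(x) − λ(x)·Id)^ρ)`. -/
noncomputable def eigenDist {n : ℕ} (A : OpField n) (lam : Vec n → ℝ) (ρ : ℕ)
    (x : Vec n) : Submodule ℝ (Vec n) :=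
  LinearMap.ker (((A x - lam x • 1) ^ ρ : Vec n →L[ℝ] Vec n) : Vec n →ₗ[ℝ] Vec n)

/-- Spectral regularity of an operator field `A` on `U`: smooth pointwise-distinct
eigenvalue functions `lam i`, Riesz indices `ρ i ≥ 1` with
`ker (A−λᵢ)^{ρᵢ} = ker (A−λᵢ)^{ρᵢ+1}`, the dimension of each generalized
eigen-distribution constantly `r i`, and ℝⁿ the internal direct sum of them. -/
structure SpectralRegular {n : ℕ} (U : Set (Vec n)) (A : OpField n)
    (s : ℕ) (lam : Fin s → Vec n → ℝ) (ρ : Fin s → ℕ) (r : Fin s → ℕ) : Prop where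
  smooth_lam : ∀ i, ContDiffOn ℝ (⊤ : ℕ∞) (lam i) U
  distinct : ∀ i j, i ≠ j → ∀ x ∈ U, lam i x ≠ lam j x
  rho_pos : ∀ i, 1 ≤ ρ i
  riesz : ∀ i, ∀ x ∈ U, eigenDist A (lam i) (ρ i) x = eigenDist A (lam i) (ρ i + 1) x
  rank_const : ∀ i, ∀ x ∈ U, Module.finrank ℝ (eigenDist A (lam i) (ρ i) x) = r i
  direct : ∀ x ∈ U, DirectSum.IsInternal (fun i => eigenDist A (lam i) (ρ i) x)

/-- A distribution `x ↦ 𝒟(x) ⊆ ℝⁿ` is involutive on `U` if the Lie bracket of any two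
smooth vector fields taking values in it again takes values in it. -/
def Involutive {n : ℕ} (U : Set (Vec n)) (D : Vec n → Submodule ℝ (Vec n)) : Prop :=
  ∀ V W : VF n, ContDiffOn ℝ (⊤ : ℕ∞) V U → ContDiffOn ℝ (⊤ : ℕ∞) W U →
    (∀ x ∈ U, V x ∈ D x) → (∀ x ∈ U, W x ∈ D x) →
    ∀ x ∈ U, lieBracket V W x ∈ D x

/-!
Fix one operator field `A` with an eigenvalue function `λ`, and put `N = A - λ` and
`D = ker N^ρ`; `D` is invariant under `A` and `N`. Let `V`, `W` be sections of `D` such that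
every bracket `[N^a V, N^b W]` with `(a, b) ≠ (0, 0)` already lies in `D`. Writing `A = λ + N`
and expanding by the Leibniz rule gives `[A V, W] ≡ [V, A W] ≡ λ [V, W]` and
`[A V, A W] ≡ λ² [V, W]` modulo `D`, and this property of `(V, W)` passes to `(A V, W)` and
`(V, A W)`. The recursion defining `τ⁽ᵐ⁾` then collapses modulo `D` to
`τ⁽ᵐ⁾(V, W) ≡ N^{2m} [V, W]`. If `τ⁽ˡ⁾` vanishes, `[V, W]` lies in `ker N^{ρ + 2l}`, which
is `D` by the Riesz condition. That all other brackets lie in `D` follows by induction on the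
orders `a`, `b` with `N^a V = 0` and `N^b W = 0`, which exist since `V`, `W` are sections of `D`.
An intersection of involutive distributions is involutive.
-/

lemma pow_sub_apply_pow_apply_eq_zero {R M : Type*} [Semiring R] [TopologicalSpace M]
    [AddCommMonoid M] [Module R M] {T : M →L[R] M} {v : M} {a : ℕ} (h : (T ^ a) v = 0)
    (a' : ℕ) : (T ^ (a - a')) ((T ^ a') v) = 0 := by
  obtain ⟨c, hc⟩ : ∃ c, a - a' + a' = c + a := ⟨a' - a, by omega⟩
  rw [← mul_apply_eq_comp, ← pow_add, hc, pow_add, mul_apply_eq_comp, h, map_zero]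

lemma ContDiffOn.differentiableAt_of_isOpen {E F : Type*} [NormedAddCommGroup E]
    [NormedSpace ℝ E] [NormedAddCommGroup F] [NormedSpace ℝ F] {f : E → F} {s : Set E}
    (hf : ContDiffOn ℝ (⊤ : ℕ∞) f s) (hs : IsOpen s) {x : E} (hx : x ∈ s) :
    DifferentiableAt ℝ f x :=
  (hf.differentiableOn (by simp)).differentiableAt (hs.mem_nhds hx)

section

variable {n : ℕ}

def shiftOp (A : OpField n) (lam : Vec n → ℝ) : OpField n := fun x => A x - lam x • 1

@[simp]
lemma opApp_one (V : VF n) : opApp 1 V = V := rfl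

lemma opApp_mul (A B : OpField n) (V : VF n) : opApp (A * B) V = opApp A (opApp B V) := rfl

section Pointwise

variable {A : OpField n} {lam : Vec n → ℝ} {ρ : ℕ} {x v : Vec n}

lemma mem_eigenDist : v ∈ eigenDist A lam ρ x ↔ (shiftOp A lam x ^ ρ) v = 0 :=
  LinearMap.mem_ker

lemma commute_shiftOp (A : OpField n) (lam : Vec n → ℝ) (x : Vec n) :
    Commute (A x) (shiftOp A lam x) :=
  (Commute.refl _).sub_right ((Commute.one_right _).smul_right _)

lemma apply_mem_eigenDist_of_commute {T : Vec n →L[ℝ] Vec n}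
    (hT : Commute T (shiftOp A lam x)) (hv : v ∈ eigenDist A lam ρ x) :
    T v ∈ eigenDist A lam ρ x := by
  rw [mem_eigenDist] at hv ⊢
  rw [← mul_apply_eq_comp, ← (hT.pow_right ρ).eq, mul_apply_eq_comp, hv, map_zero]

lemma SModEq.apply_of_commute {T : Vec n →L[ℝ] Vec n} (hT : Commute T (shiftOp A lam x))
    {a b : Vec n} (h : a ≡ b [SMOD eigenDist A lam ρ x]) :
    T a ≡ T b [SMOD eigenDist A lam ρ x] := by
  rw [SModEq.sub_mem, ← map_sub] at *
  exact apply_mem_eigenDist_of_commute hT h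

lemma eigenDist_add_eq_of_eq_succ (h : eigenDist A lam ρ x = eigenDist A lam (ρ + 1) x)
    (j : ℕ) : eigenDist A lam (ρ + j) x = eigenDist A lam ρ x := by
  simp only [eigenDist, ContinuousLinearMap.toLinearMap_pow] at h ⊢
  exact (Module.End.ker_pow_constant h j).symm

end Pointwise

lemma lieBracket_swap (V W : VF n) : lieBracket W V = -lieBracket V W := by
  ext1 x; simp [lieBracket]

lemma lieBracket_eq_zero_of_eqOn_zero_right {U : Set (Vec n)} (hU : IsOpen U) {W : VF n}
    (hW : Set.EqOn W 0 U) (V : VF n) {x : Vec n} (hx : x ∈ U) : lieBracket V W x = 0 := by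
  have hW' : W =ᶠ[nhds x] 0 := Filter.eventuallyEq_of_mem (hU.mem_nhds hx) hW
  simp [lieBracket, hW'.fderiv_eq, hW hx]

lemma lieBracket_eq_zero_of_eqOn_zero_left {U : Set (Vec n)} (hU : IsOpen U) {V : VF n}
    (hV : Set.EqOn V 0 U) (W : VF n) {x : Vec n} (hx : x ∈ U) : lieBracket V W x = 0 := by
  rw [lieBracket_swap, Pi.neg_apply, lieBracket_eq_zero_of_eqOn_zero_right hU hV W hx,
    neg_zero]

lemma lieBracket_smul_add_right {f : Vec n → ℝ} {V W W' : VF n} {x : Vec n}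
    (hf : DifferentiableAt ℝ f x) (hW : DifferentiableAt ℝ W x)
    (hW' : DifferentiableAt ℝ W' x) :
    lieBracket V (fun y => f y • W y + W' y) x
      = f x • lieBracket V W x + fderiv ℝ f x (V x) • W x + lieBracket V W' x := by
  rw [lieBracket, fderiv_fun_add (hf.fun_smul hW) hW', fderiv_fun_smul hf hW]
  simp only [lieBracket, add_apply, smul_apply, ContinuousLinearMap.smulRight_apply, map_add,
    map_smul, smul_sub]
  abel

section Smooth

variable {U : Set (Vec n)} {A : OpField n} {lam : Vec n → ℝ}

lemma ContDiffOn.opApp {V : VF n} (hA : ContDiffOn ℝ (⊤ : ℕ∞) A U)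
    (hV : ContDiffOn ℝ (⊤ : ℕ∞) V U) : ContDiffOn ℝ (⊤ : ℕ∞) (opApp A V) U :=
  hA.clm_apply hV

lemma ContDiffOn.shiftOp_pow (hA : ContDiffOn ℝ (⊤ : ℕ∞) A U)
    (hlam : ContDiffOn ℝ (⊤ : ℕ∞) lam U) (a : ℕ) :
    ContDiffOn ℝ (⊤ : ℕ∞) (shiftOp A lam ^ a) U :=
  (hA.sub (hlam.smul contDiffOn_const)).pow a

end Smooth

lemma lieBracket_opApp_right_smodEq {A : OpField n} {lam : Vec n → ℝ} {ρ : ℕ} {V W : VF n}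
    {x : Vec n} (hlam : DifferentiableAt ℝ lam x) (hW : DifferentiableAt ℝ W x)
    (hNW : DifferentiableAt ℝ (opApp (shiftOp A lam) W) x) (hWx : W x ∈ eigenDist A lam ρ x) :
    lieBracket V (opApp A W) x
      ≡ lam x • lieBracket V W x + lieBracket V (opApp (shiftOp A lam) W) x
        [SMOD eigenDist A lam ρ x] := by
  have hAW : opApp A W = fun y => lam y • W y + opApp (shiftOp A lam) W y := by
    ext1 y; simp [opApp, shiftOp]
  rw [hAW, lieBracket_smul_add_right hlam hW hNW, SModEq.sub_mem]
  convert Submodule.smul_mem _ (fderiv ℝ lam x (V x)) hWx using 1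
  abel

/-- The condition on `(V, W)` under which `τ⁽ᵐ⁾(V, W) ≡ N^{2m} [V, W]` modulo `eigenDist`,
with `N = shiftOp A lam`. -/
structure AdmissiblePair (U : Set (Vec n)) (A : OpField n) (lam : Vec n → ℝ) (ρ : ℕ)
    (V W : VF n) : Prop where
  smooth_left : ContDiffOn ℝ (⊤ : ℕ∞) V U
  smooth_right : ContDiffOn ℝ (⊤ : ℕ∞) W U
  mem_left : ∀ x ∈ U, V x ∈ eigenDist A lam ρ x
  mem_right : ∀ x ∈ U, W x ∈ eigenDist A lam ρ x
  bracket_mem : ∀ a b : ℕ, a + b ≠ 0 → ∀ x ∈ U,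
    lieBracket (opApp (shiftOp A lam ^ a) V) (opApp (shiftOp A lam ^ b) W) x
      ∈ eigenDist A lam ρ x

namespace AdmissiblePair

variable {U : Set (Vec n)} {A : OpField n} {lam : Vec n → ℝ} {ρ : ℕ} {V W : VF n} {x : Vec n}

lemma symm (h : AdmissiblePair U A lam ρ V W) : AdmissiblePair U A lam ρ W V where
  smooth_left := h.smooth_right
  smooth_right := h.smooth_left
  mem_left := h.mem_right
  mem_right := h.mem_left
  bracket_mem a b hab x hx := by
    rw [lieBracket_swap, Pi.neg_apply, neg_mem_iff]
    exact h.bracket_mem b a (by omega) x hx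

lemma opApp_right (hU : IsOpen U) (hA : ContDiffOn ℝ (⊤ : ℕ∞) A U)
    (hlam : ContDiffOn ℝ (⊤ : ℕ∞) lam U) (h : AdmissiblePair U A lam ρ V W) :
    AdmissiblePair U A lam ρ V (opApp A W) where
  smooth_left := h.smooth_left
  smooth_right := hA.opApp h.smooth_right
  mem_left := h.mem_left
  mem_right x hx := apply_mem_eigenDist_of_commute (commute_shiftOp A lam x) (h.mem_right x hx)
  bracket_mem a b hab x hx := by
    have hNW : ContDiffOn ℝ (⊤ : ℕ∞) (opApp (shiftOp A lam ^ b) W) U :=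
      (hA.shiftOp_pow hlam b).opApp h.smooth_right
    have hcomm : opApp (shiftOp A lam ^ b) (opApp A W) = opApp A (opApp (shiftOp A lam ^ b) W) := by
      ext1 y
      exact congrArg (· (W y)) ((commute_shiftOp A lam y).pow_right b).eq.symm
    rw [hcomm]
    refine SModEq.zero.1 ((lieBracket_opApp_right_smodEq (hlam.differentiableAt_of_isOpen hU hx)
      (hNW.differentiableAt_of_isOpen hU hx) ?_ ?_).trans (SModEq.zero.2 ?_))
    · rw [← opApp_mul, ← pow_succ']
      exact ((hA.shiftOp_pow hlam (b + 1)).opApp h.smooth_right).differentiableAt_of_isOpen hU hx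
    · exact apply_mem_eigenDist_of_commute ((Commute.refl _).pow_left b) (h.mem_right x hx)
    · rw [← opApp_mul, ← pow_succ']
      exact add_mem (Submodule.smul_mem _ _ (h.bracket_mem a b hab x hx))
        (h.bracket_mem a (b + 1) (by omega) x hx)

lemma opApp_left (hU : IsOpen U) (hA : ContDiffOn ℝ (⊤ : ℕ∞) A U)
    (hlam : ContDiffOn ℝ (⊤ : ℕ∞) lam U) (h : AdmissiblePair U A lam ρ V W) :
    AdmissiblePair U A lam ρ (opApp A V) W :=
  (h.symm.opApp_right hU hA hlam).symm

lemma lieBracket_opApp_right_smodEq (hU : IsOpen U) (hA : ContDiffOn ℝ (⊤ : ℕ∞) A U)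
    (hlam : ContDiffOn ℝ (⊤ : ℕ∞) lam U) (h : AdmissiblePair U A lam ρ V W)
    (hx : x ∈ U) :
    lieBracket V (opApp A W) x ≡ lam x • lieBracket V W x [SMOD eigenDist A lam ρ x] := by
  have hNW : ContDiffOn ℝ (⊤ : ℕ∞) (opApp (shiftOp A lam) W) U := by
    simpa using (hA.shiftOp_pow hlam 1).opApp h.smooth_right
  have hmem : lieBracket V (opApp (shiftOp A lam) W) x ∈ eigenDist A lam ρ x := by
    simpa using h.bracket_mem 0 1 one_ne_zero x hx
  simpa using (_root_.lieBracket_opApp_right_smodEq (hlam.differentiableAt_of_isOpen hU hx)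
    (h.smooth_right.differentiableAt_of_isOpen hU hx) (hNW.differentiableAt_of_isOpen hU hx)
    (h.mem_right x hx)).trans (SModEq.rfl.add (SModEq.zero.2 hmem))

lemma lieBracket_opApp_left_smodEq (hU : IsOpen U) (hA : ContDiffOn ℝ (⊤ : ℕ∞) A U)
    (hlam : ContDiffOn ℝ (⊤ : ℕ∞) lam U) (h : AdmissiblePair U A lam ρ V W)
    (hx : x ∈ U) :
    lieBracket (opApp A V) W x ≡ lam x • lieBracket V W x [SMOD eigenDist A lam ρ x] := by
  simpa [lieBracket_swap W] using (h.symm.lieBracket_opApp_right_smodEq hU hA hlam hx).neg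

lemma lieBracket_opApp_opApp_smodEq (hU : IsOpen U) (hA : ContDiffOn ℝ (⊤ : ℕ∞) A U)
    (hlam : ContDiffOn ℝ (⊤ : ℕ∞) lam U) (h : AdmissiblePair U A lam ρ V W)
    (hx : x ∈ U) :
    lieBracket (opApp A V) (opApp A W) x
      ≡ lam x • lam x • lieBracket V W x [SMOD eigenDist A lam ρ x] :=
  ((h.opApp_left hU hA hlam).lieBracket_opApp_right_smodEq hU hA hlam hx).trans
    ((h.lieBracket_opApp_left_smodEq hU hA hlam hx).smul (lam x))

theorem genTorsion_smodEq (hU : IsOpen U) (hA : ContDiffOn ℝ (⊤ : ℕ∞) A U)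
    (hlam : ContDiffOn ℝ (⊤ : ℕ∞) lam U) (h : AdmissiblePair U A lam ρ V W) (hx : x ∈ U)
    (m : ℕ) : genTorsion A m V W x
      ≡ (shiftOp A lam x ^ (2 * m)) (lieBracket V W x) [SMOD eigenDist A lam ρ x] := by
  induction m generalizing V W with
  | zero => simp [genTorsion]
  | succ m ih =>
    set N := shiftOp A lam x
    have hA' : Commute (A x) N := commute_shiftOp A lam x
    have hN : Commute (N ^ (2 * m)) N := (Commute.refl N).pow_left _
    have hVW := (ih h).apply_of_commute hA' |>.apply_of_commute hA'
    have hAVAW := (ih (h.opApp_left hU hA hlam |>.opApp_right hU hA hlam)).trans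
      ((h.lieBracket_opApp_opApp_smodEq hU hA hlam hx).apply_of_commute hN)
    have hVAW := (ih (h.opApp_right hU hA hlam)).trans
      ((h.lieBracket_opApp_right_smodEq hU hA hlam hx).apply_of_commute hN)
    have hAVW := (ih (h.opApp_left hU hA hlam)).trans
      ((h.lieBracket_opApp_left_smodEq hU hA hlam hx).apply_of_commute hN)
    calc genTorsion A (m + 1) V W x
        = A x (A x (genTorsion A m V W x)) + genTorsion A m (opApp A V) (opApp A W) x
          - A x (genTorsion A m V (opApp A W) x + genTorsion A m (opApp A V) W x) := rfl
      _ ≡ A x (A x ((N ^ (2 * m)) (lieBracket V W x)))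
          + (N ^ (2 * m)) (lam x • lam x • lieBracket V W x)
          - A x ((N ^ (2 * m)) (lam x • lieBracket V W x)
            + (N ^ (2 * m)) (lam x • lieBracket V W x)) [SMOD eigenDist A lam ρ x] :=
        (hVW.add hAVAW).sub ((hVAW.add hAVW).apply_of_commute hA')
      _ = (N ^ (2 * (m + 1))) (lieBracket V W x) := by
        rw [show 2 * (m + 1) = 2 + 2 * m by ring, pow_add, mul_apply_eq_comp, sq,
          mul_apply_eq_comp, map_smul, map_smul]
        generalize (N ^ (2 * m)) (lieBracket V W x) = P
        simp only [N, shiftOp, sub_apply, smul_apply, one_apply_eq_self, map_sub, map_smul, map_add]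
        module

theorem lieBracket_mem (hU : IsOpen U)
    (hA : ContDiffOn ℝ (⊤ : ℕ∞) A U) (hlam : ContDiffOn ℝ (⊤ : ℕ∞) lam U)
    (hriesz : ∀ x ∈ U, eigenDist A lam ρ x = eigenDist A lam (ρ + 1) x) {l : ℕ}
    (hτ : ∀ x ∈ U, genTorsion A l V W x = 0) (h : AdmissiblePair U A lam ρ V W) :
    ∀ x ∈ U, lieBracket V W x ∈ eigenDist A lam ρ x := by
  intro x hx
  have hmem : (shiftOp A lam x ^ (2 * l)) (lieBracket V W x) ∈ eigenDist A lam ρ x := by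
    rw [← SModEq.zero, ← hτ x hx]
    exact (h.genTorsion_smodEq hU hA hlam hx l).symm
  rw [← eigenDist_add_eq_of_eq_succ (hriesz x hx) (2 * l), mem_eigenDist, pow_add,
    mul_apply_eq_comp]
  exact mem_eigenDist.1 hmem

end AdmissiblePair

variable {U : Set (Vec n)} {A : OpField n} {lam : Vec n → ℝ} {ρ : ℕ}

theorem lieBracket_mem_eigenDist_of_pow_apply_eq_zero (hU : IsOpen U)
    (hA : ContDiffOn ℝ (⊤ : ℕ∞) A U) (hlam : ContDiffOn ℝ (⊤ : ℕ∞) lam U)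
    (hriesz : ∀ x ∈ U, eigenDist A lam ρ x = eigenDist A lam (ρ + 1) x) {l : ℕ}
    (hvan : ∀ X Y : VF n, ContDiffOn ℝ (⊤ : ℕ∞) X U → ContDiffOn ℝ (⊤ : ℕ∞) Y U →
      ∀ x ∈ U, genTorsion A l X Y x = 0)
    {V W : VF n} (hV : ContDiffOn ℝ (⊤ : ℕ∞) V U) (hW : ContDiffOn ℝ (⊤ : ℕ∞) W U)
    (hVmem : ∀ x ∈ U, V x ∈ eigenDist A lam ρ x)
    (hWmem : ∀ x ∈ U, W x ∈ eigenDist A lam ρ x) {a b : ℕ}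
    (hVa : ∀ x ∈ U, (shiftOp A lam x ^ a) (V x) = 0)
    (hWb : ∀ x ∈ U, (shiftOp A lam x ^ b) (W x) = 0) :
    ∀ x ∈ U, lieBracket V W x ∈ eigenDist A lam ρ x := by
  intro x hx
  rcases Nat.eq_zero_or_pos a with rfl | ha
  · simp [lieBracket_eq_zero_of_eqOn_zero_left hU (fun y hy => by simpa using hVa y hy) W hx]
  rcases Nat.eq_zero_or_pos b with rfl | hb
  · simp [lieBracket_eq_zero_of_eqOn_zero_right hU (fun y hy => by simpa using hWb y hy) V hx]
  refine AdmissiblePair.lieBracket_mem hU hA hlam hriesz (hvan V W hV hW)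
    ⟨hV, hW, hVmem, hWmem, fun a' b' hab' => ?_⟩ x hx
  exact lieBracket_mem_eigenDist_of_pow_apply_eq_zero hU hA hlam hriesz hvan
    ((hA.shiftOp_pow hlam a').opApp hV) ((hA.shiftOp_pow hlam b').opApp hW)
    (fun y hy => apply_mem_eigenDist_of_commute ((Commute.refl _).pow_left a') (hVmem y hy))
    (fun y hy => apply_mem_eigenDist_of_commute ((Commute.refl _).pow_left b') (hWmem y hy))
    -- `a - a'` truncates to `0` when `a' ≥ a`, and then `N^{a'} V` vanishes on `U` anyway.
    (a := a - a') (b := b - b')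
    (fun y hy => pow_sub_apply_pow_apply_eq_zero (hVa y hy) a')
    (fun y hy => pow_sub_apply_pow_apply_eq_zero (hWb y hy) b')
termination_by a + b
decreasing_by omega

theorem eigenDist_involutive (hU : IsOpen U) (hA : ContDiffOn ℝ (⊤ : ℕ∞) A U)
    (hlam : ContDiffOn ℝ (⊤ : ℕ∞) lam U)
    (hriesz : ∀ x ∈ U, eigenDist A lam ρ x = eigenDist A lam (ρ + 1) x) {l : ℕ}
    (hvan : ∀ X Y : VF n, ContDiffOn ℝ (⊤ : ℕ∞) X U → ContDiffOn ℝ (⊤ : ℕ∞) Y U →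
      ∀ x ∈ U, genTorsion A l X Y x = 0) :
    Involutive U (eigenDist A lam ρ) := fun _ _ hV hW hVmem hWmem =>
  lieBracket_mem_eigenDist_of_pow_apply_eq_zero hU hA hlam hriesz hvan hV hW hVmem hWmem
    (fun x hx => mem_eigenDist.1 (hVmem x hx)) (fun x hx => mem_eigenDist.1 (hWmem x hx))

theorem Involutive.iInf {ι : Sort*} {D : ι → Vec n → Submodule ℝ (Vec n)}
    (hD : ∀ i, Involutive U (D i)) : Involutive U (fun x => ⨅ i, D i x) :=
  fun V W hV hW hVmem hWmem x hx => Submodule.mem_iInf _ |>.2 fun i =>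
    hD i V W hV hW (fun y hy => Submodule.mem_iInf _ |>.1 (hVmem y hy) i)
      (fun y hy => Submodule.mem_iInf _ |>.1 (hWmem y hy) i) x hx

end

theorem intersection_eigenDist_involutive_general {n : ℕ} (U : Set (Vec n)) (hU : IsOpen U)
    (w : ℕ) (K : Fin w → OpField n)
    (hKsm : ∀ α, ContDiffOn ℝ (⊤ : ℕ∞) (K α) U)
    (s : Fin w → ℕ) (lam : (α : Fin w) → Fin (s α) → Vec n → ℝ)
    (ρ r : (α : Fin w) → Fin (s α) → ℕ)
    (hreg : ∀ α, SpectralRegular U (K α) (s α) (lam α) (ρ α) (r α))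
    (l : ℕ)
    (hvan : ∀ α, ∀ X Y : VF n, ContDiffOn ℝ (⊤ : ℕ∞) X U → ContDiffOn ℝ (⊤ : ℕ∞) Y U →
      ∀ x ∈ U, genTorsion (K α) l X Y x = 0)
    (idx : (α : Fin w) → Fin (s α)) :
    Involutive U (fun x => ⨅ α, eigenDist (K α) (lam α (idx α)) (ρ α (idx α)) x) :=
  Involutive.iInf fun α => eigenDist_involutive hU (hKsm α) ((hreg α).smooth_lam (idx α))
    ((hreg α).riesz (idx α)) (hvan α)

/-- for pairwise commuting, spectrally regular operator fields K₁,…,K_w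
each with vanishing level-l torsion on U (l ≥ 1 common), any intersection
D^{(1)} ∩ ⋯ ∩ D^{(w)} of one chosen generalized eigen-distribution per operator is
involutive. -/
theorem intersection_eigenDist_involutive {n : ℕ} (U : Set (Vec n)) (hU : IsOpen U)
    (w : ℕ) (K : Fin w → OpField n)
    (hKsm : ∀ α, ContDiffOn ℝ (⊤ : ℕ∞) (K α) U)
    (hcomm : ∀ α β, ∀ x ∈ U, K α x ∘L K β x = K β x ∘L K α x)
    (s : Fin w → ℕ) (lam : (α : Fin w) → Fin (s α) → Vec n → ℝ)
    (ρ r : (α : Fin w) → Fin (s α) → ℕ)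
    (hreg : ∀ α, SpectralRegular U (K α) (s α) (lam α) (ρ α) (r α))
    (l : ℕ) (hl : 1 ≤ l)
    (hvan : ∀ α, ∀ X Y : VF n, ContDiffOn ℝ (⊤ : ℕ∞) X U → ContDiffOn ℝ (⊤ : ℕ∞) Y U →
      ∀ x ∈ U, genTorsion (K α) l X Y x = 0)
    (idx : (α : Fin w) → Fin (s α)) :
    Involutive U (fun x => ⨅ α, eigenDist (K α) (lam α (idx α)) (ρ α (idx α)) x) :=
  intersection_eigenDist_involutive_general U hU w K hKsm s lam ρ r hreg l hvan idx
end
end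

section
/- Let g₁, g₂, g₃ : ℝ⁴ → ℝ, g₄ : ℝ² → ℝ, g₅ : ℝ → ℝ be smooth. On the open set U = {x ∈ ℝ⁷ : x₁ ≠ 0} with coordinates x = (x₁, …, x₇), writing g₁ = g₁(x₁,x₂,x₃,x₄), g₂ = g₂(x₁,x₂,x₃,x₄), g₃ = g₃(x₁,x₂,x₃,x₄), g₄ = g₄(x₅,x₆), g₅ = g₅(x₇), let K be the operator field whose matrix in the standard basis is K(x) = [[g₁, x₁, x₁+g₂, −x₁, x₁, −x₁, x₁], [1, g₅, −g₁+g₅+x₁, g₄−g₅, 0, g₁−g₅−x₁, −1−g₄+g₅], [0, 0, g₁, 0, 0, 0, 0], [1+g₁−g₄, x₁, x₁+g₂, −1−x₁+g₄, x₁, −x₁, x₁], [0, g₁−g₅, g₁+g₃−g₅+1/x₁, −g₁+g₅, g₁, −g₁+g₅−1/x₁, g₁−g₅], [0, 0, x₁, 0, 0, g₁−x₁, 0], [g₁−g₄, x₁, x₁+g₂, −1−x₁, x₁, −x₁, 1+x₁+g₄]]. Then the level-4 generalized Nijenhuis torsion of K vanishes identically: τ⁽⁴⁾_K(X,Y)(x)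 = 0 for all smooth vector fields X, Y on U and all x ∈ U. -/
/-!
In the constant frame `f₀, …, f₆` formed by the columns of `frame`, `K` takes the shape
`normalOp`: upper triangular with diagonal `(g₁, g₁, g₁, g₅, g₁ - t, g₄ + 1, g₄ - 1)`, where
`t = x₁`.

The generalized torsion of level `m + 1` is tensorial: at each point it is `Φᵐ N`, where `N` is
the Nijenhuis tensor and `Φ B (u, v) = K² B(u, v) + B(K u, K v) - K (B(u, K v) + B(K u, v))`.
Since `Φ` commutes with a constant change of frame, it suffices to iterate it in the normal frame,
where `Φ N` takes values in `span(f₀, f₁)`, `Φ² N` in `span f₀`, and `Φ³ N = 0`.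
-/

noncomputable section

/-- The 7×7 matrix of the operator field K from the level-four example, with
g₁,g₂,g₃ = gᵢ(x₁,x₂,x₃,x₄), g₄ = g₄(x₅,x₆), g₅ = g₅(x₇) (coordinates are 0-indexed). -/
noncomputable def Kmat7 (g₁ g₂ g₃ : ℝ × ℝ × ℝ × ℝ → ℝ) (g₄ : ℝ × ℝ → ℝ) (g₅ : ℝ → ℝ)
    (x : Vec 7) : Matrix (Fin 7) (Fin 7) ℝ :=
  let G1 := g₁ (x 0, x 1, x 2, x 3)
  let G2 := g₂ (x 0, x 1, x 2, x 3)
  let G3 := g₃ (x 0, x 1, x 2, x 3)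
  let G4 := g₄ (x 4, x 5)
  let G5 := g₅ (x 6)
  let t := x 0
  !![G1, t, t + G2, -t, t, -t, t;
     1, G5, -G1 + G5 + t, G4 - G5, 0, G1 - G5 - t, -1 - G4 + G5;
     0, 0, G1, 0, 0, 0, 0;
     1 + G1 - G4, t, t + G2, -1 - t + G4, t, -t, t;
     0, G1 - G5, G1 + G3 - G5 + t⁻¹, -G1 + G5, G1, -G1 + G5 - t⁻¹, G1 - G5;
     0, 0, t, 0, 0, G1 - t, 0;
     G1 - G4, t, t + G2, -1 - t, t, -t, 1 + t + G4]

/-- The operator field on U = {x ∈ ℝ⁷ : x₁ ≠ 0} whose matrix in the standard basis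
is `Kmat7`. -/
noncomputable def Kop7 (g₁ g₂ g₃ : ℝ × ℝ × ℝ × ℝ → ℝ) (g₄ : ℝ × ℝ → ℝ) (g₅ : ℝ → ℝ) :
    OpField 7 :=
  fun x => LinearMap.toContinuousLinearMap (Matrix.toLin' (Kmat7 g₁ g₂ g₃ g₄ g₅ x))

section TorsionAlgebra

variable {E E' F : Type*} [AddCommGroup E] [AddCommGroup E'] [FunLike F E E']
  [AddMonoidHomClass F E E']

def torsionStep (K : E → E) (B : E → E → E) : E → E → E :=
  fun u v => K (K (B u v)) + B (K u) (K v) - K (B u (K v) + B (K u) v)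

def nijenhuisForm (K : E → E) (D : E → E → E) : E → E → E :=
  fun u v => D (K u) v - D (K v) u - K (D u v - D v u)

variable {K : E' → E'} {K' : E → E} (P : F)

theorem nijenhuisForm_map {D : E' → E' → E'} {D' : E → E → E} (hK : ∀ z, K (P z) = P (K' z))
    (hD : ∀ h z, D (P h) (P z) = P (D' h z)) (a b : E) :
    nijenhuisForm K D (P a) (P b) = P (nijenhuisForm K' D' a b) := by
  simp only [nijenhuisForm, hK, hD, ← map_sub]

theorem torsionStep_map {B : E' → E' → E'} {B' : E → E → E} (hK : ∀ z, K (P z) = P (K' z))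
    (hB : ∀ a b, B (P a) (P b) = P (B' a b)) (a b : E) :
    torsionStep K B (P a) (P b) = P (torsionStep K' B' a b) := by
  simp only [torsionStep, hK, hB, ← map_add, ← map_sub]

theorem iterate_torsionStep_map {B : E' → E' → E'} {B' : E → E → E}
    (hK : ∀ z, K (P z) = P (K' z)) (hB : ∀ a b, B (P a) (P b) = P (B' a b)) (m : ℕ) (a b : E) :
    (torsionStep K)^[m] B (P a) (P b) = P ((torsionStep K')^[m] B' a b) := by
  induction m generalizing a b with
  | zero => exact hB a b
  | succ m ih =>
    simp only [Function.iterate_succ_apply']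
    exact torsionStep_map P hK ih a b

end TorsionAlgebra

section Tensoriality

variable {n : ℕ} {A : OpField n} {x : Vec n}

theorem genTorsion_one_apply (hA : DifferentiableAt ℝ A x) {V W : VF n}
    (hV : DifferentiableAt ℝ V x) (hW : DifferentiableAt ℝ W x) :
    genTorsion A 1 V W x = nijenhuisForm (A x) (fun h => fderiv ℝ A x h) (V x) (W x) := by
  have hAV : fderiv ℝ (opApp A V) x = (A x).comp (fderiv ℝ V x) + (fderiv ℝ A x).flip (V x) :=
    fderiv_clm_apply hA hV
  have hAW : fderiv ℝ (opApp A W) x = (A x).comp (fderiv ℝ W x) + (fderiv ℝ A x).flip (W x) :=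
    fderiv_clm_apply hA hW
  simp only [genTorsion, lieBracket, nijenhuisForm, opApp, hAV, hAW, add_apply,
    ContinuousLinearMap.comp_apply, ContinuousLinearMap.flip_apply, map_add, map_sub]
  abel

theorem genTorsion_succ_apply (hA : DifferentiableAt ℝ A x) (m : ℕ) {V W : VF n}
    (hV : DifferentiableAt ℝ V x) (hW : DifferentiableAt ℝ W x) :
    genTorsion A (m + 1) V W x =
      (torsionStep (A x))^[m] (nijenhuisForm (A x) (fun h => fderiv ℝ A x h)) (V x) (W x) := by
  induction m generalizing V W with
  | zero => exact genTorsion_one_apply hA hV hW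
  | succ m ih =>
    have hAV : DifferentiableAt ℝ (opApp A V) x := hA.clm_apply hV
    have hAW : DifferentiableAt ℝ (opApp A W) x := hA.clm_apply hW
    rw [genTorsion.eq_2]
    beta_reduce
    rw [ih hV hW, ih hAV hAW, ih hV hAW, ih hAV hW, Function.iterate_succ_apply']
    rfl

end Tensoriality

section NormalForm

variable (q₁ q₂ q₃ q₄ q₅ t s w : ℝ) (dq₁ dq₂ dq₃ dq₄ dq₅ : Vec 7 → ℝ)

def normalOp (z : Vec 7) : Vec 7 :=
  ![q₁ * z 0 + t * z 1 + q₂ * z 2, q₁ * z 1 + q₃ * z 2 + s * z 4, q₁ * z 2, q₅ * z 3,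
    (q₁ - t) * z 4, (q₄ + 1) * z 5, (q₄ - 1) * z 6]

/-- The derivative of `normalOp` in the direction `h` when `qᵢ` has differential `dqᵢ`, `t` is the
coordinate `z 0` and `ds = w dt` (so `w = -t⁻²` for `s = t⁻¹`). -/
def normalOpDeriv (h z : Vec 7) : Vec 7 :=
  ![dq₁ h * z 0 + h 0 * z 1 + dq₂ h * z 2, dq₁ h * z 1 + dq₃ h * z 2 + w * h 0 * z 4, dq₁ h * z 2,
    dq₅ h * z 3, (dq₁ h - h 0) * z 4, dq₄ h * z 5, dq₄ h * z 6]

local notation "K'" => normalOp q₁ q₂ q₃ q₄ q₅ t s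
local notation "N'" => nijenhuisForm (normalOp q₁ q₂ q₃ q₄ q₅ t s)
  (normalOpDeriv w dq₁ dq₂ dq₃ dq₄ dq₅)

/- These identities are polynomial: they hold without `s = t⁻¹`, `w = -t⁻²`, and for
differentials `dqᵢ` that need not even be linear. -/
theorem torsionStep_nijenhuisForm_normalOp :
    torsionStep K' N' = fun u v =>
      ![2 * t ^ 2 * (w * t - s) * (u 1 * v 4 - u 4 * v 1)
          + t * (w * q₃ * t - 2 * q₂ * (w * t - s)) * (u 4 * v 2 - u 2 * v 4)
          + t * (u 2 * (dq₃ (K' (K' v)) - 2 * q₁ * dq₃ (K' v) + q₁ ^ 2 * dq₃ v)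
              - v 2 * (dq₃ (K' (K' u)) - 2 * q₁ * dq₃ (K' u) + q₁ ^ 2 * dq₃ u)),
        q₃ * t * (w * t - s) * (u 4 * v 2 - u 2 * v 4), 0, 0, 0, 0, 0] := by
  funext u v i
  fin_cases i <;> simp only [torsionStep, nijenhuisForm, normalOp, normalOpDeriv, Fin.zero_eta,
      Fin.mk_one, Fin.reduceFinMk, Matrix.cons_val, Pi.add_apply, Pi.sub_apply] <;> ring

theorem iterate_two_torsionStep_normalOp :
    (torsionStep K')^[2] N' = fun u v =>
      ![3 * q₃ * t ^ 3 * (w * t - s) * (u 4 * v 2 - u 2 * v 4), 0, 0, 0, 0, 0, 0] := by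
  rw [Function.iterate_succ_apply', Function.iterate_one, torsionStep_nijenhuisForm_normalOp]
  funext u v i
  fin_cases i <;> simp only [torsionStep, normalOp, Fin.zero_eta, Fin.mk_one, Fin.reduceFinMk,
      Matrix.cons_val, Pi.add_apply, Pi.sub_apply] <;> ring

theorem iterate_three_torsionStep_normalOp : (torsionStep K')^[3] N' = 0 := by
  rw [Function.iterate_succ_apply', iterate_two_torsionStep_normalOp]
  funext u v i
  fin_cases i <;> simp only [torsionStep, normalOp, Fin.zero_eta, Fin.mk_one, Fin.reduceFinMk,
      Matrix.cons_val, Pi.add_apply, Pi.sub_apply, Pi.zero_apply] <;> ring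

end NormalForm

theorem hasFDerivAt_normalOp {θ₁ θ₂ θ₃ θ₄ θ₅ : Vec 7 → ℝ} {θ₁' θ₂' θ₃' θ₄' θ₅' : Vec 7 →L[ℝ] ℝ}
    {x : Vec 7} (h₁ : HasFDerivAt θ₁ θ₁' x) (h₂ : HasFDerivAt θ₂ θ₂' x)
    (h₃ : HasFDerivAt θ₃ θ₃' x) (h₄ : HasFDerivAt θ₄ θ₄' x) (h₅ : HasFDerivAt θ₅ θ₅' x)
    (hx : x 0 ≠ 0) (z : Vec 7) :
    ∃ L : Vec 7 →L[ℝ] Vec 7,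
      HasFDerivAt (fun y => normalOp (θ₁ y) (θ₂ y) (θ₃ y) (θ₄ y) (θ₅ y) (y 0) (y 0)⁻¹ z) L x ∧
        ∀ h, L h = normalOpDeriv (-(x 0 ^ 2)⁻¹) θ₁' θ₂' θ₃' θ₄' θ₅' h z := by
  have ht : HasFDerivAt (fun y : Vec 7 => y 0) (ContinuousLinearMap.proj (R := ℝ) 0) x :=
    hasFDerivAt_apply 0 x
  have hs := (hasDerivAt_inv hx).comp_hasFDerivAt x ht
  have H : HasFDerivAt (fun y => normalOp (θ₁ y) (θ₂ y) (θ₃ y) (θ₄ y) (θ₅ y) (y 0) (y 0)⁻¹ z) _ x :=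
    ((((h₁.mul_const (z 0)).add (ht.mul_const (z 1))).add (h₂.mul_const (z 2))).finCons
    ((((h₁.mul_const (z 1)).add (h₃.mul_const (z 2))).add (hs.mul_const (z 4))).finCons
    ((h₁.mul_const (z 2)).finCons ((h₅.mul_const (z 3)).finCons
    (((h₁.sub ht).mul_const (z 4)).finCons (((h₄.add_const 1).mul_const (z 5)).finCons
    (((h₄.sub_const 1).mul_const (z 6)).finCons
    (hasFDerivAt_const (𝕜 := ℝ) (![] : Fin 0 → ℝ) x))))))))
  refine ⟨_, H, fun h => ?_⟩
  funext i
  fin_cases i <;> simp only [normalOpDeriv, Fin.consEquivL, Fin.consLinearEquiv, Fin.consEquiv,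
      ← Matrix.vecCons.eq_1, Fin.zero_eta, Fin.mk_one, Fin.reduceFinMk, Matrix.cons_val,
      ContinuousLinearMap.comp_apply, ContinuousLinearMap.prod_apply,
      ContinuousLinearEquiv.coe_coe, ContinuousLinearEquiv.coe_mk, LinearEquiv.coe_mk,
      LinearMap.coe_mk, AddHom.coe_mk, Equiv.toFun_as_coe, Equiv.coe_fn_mk, add_apply, sub_apply,
      smul_apply, smul_eq_mul, ContinuousLinearMap.proj_apply] <;> ring

section Kop7

variable {g₁ g₂ g₃ : ℝ × ℝ × ℝ × ℝ → ℝ} {g₄ : ℝ × ℝ → ℝ} {g₅ : ℝ → ℝ}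

def frame : Vec 7 →L[ℝ] Vec 7 :=
  LinearMap.toContinuousLinearMap (Matrix.toLin' !![1, 0, 0, 0, 0, 0, 0; 0, 0, 0, -1, -1, -1, 1;
    0, 0, 1, 0, 0, 0, 0; 1, 0, 0, 0, 0, 0, 2; 0, 1, 0, 1, 0, 0, 0; 0, 0, 1, 0, -1, 0, 0;
    1, 0, 0, 0, 0, 1, 1])

theorem frame_apply (z : Vec 7) :
    frame z = ![z 0, z 6 - z 3 - z 4 - z 5, z 2, z 0 + 2 * z 6, z 1 + z 3, z 2 - z 4,
      z 0 + z 5 + z 6] := by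
  funext i
  fin_cases i <;> simp only [frame, LinearMap.coe_toContinuousLinearMap', Matrix.toLin'_apply,
      Matrix.mulVec, dotProduct, Fin.sum_univ_succ, Matrix.of_apply, Fin.zero_eta, Fin.mk_one,
      Fin.reduceFinMk, Fin.succ_zero_eq_one, Fin.reduceSucc, Matrix.cons_val, Finset.univ_eq_empty,
      Finset.sum_empty] <;> ring

theorem frame_surjective : Function.Surjective frame := fun u =>
  ⟨![u 0, u 1 + u 2 - u 3 + u 4 - u 5 + u 6, u 2, u 3 + u 5 - u 1 - u 2 - u 6, u 2 - u 5,
      u 6 - (u 0 + u 3) / 2, (u 3 - u 0) / 2], by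
    rw [frame_apply]
    funext i
    fin_cases i <;> simp only [Fin.zero_eta, Fin.mk_one, Fin.reduceFinMk, Matrix.cons_val] <;> ring⟩

theorem Kop7_frame (y z : Vec 7) :
    Kop7 g₁ g₂ g₃ g₄ g₅ y (frame z) =
      frame (normalOp (g₁ (y 0, y 1, y 2, y 3)) (g₂ (y 0, y 1, y 2, y 3))
        (g₃ (y 0, y 1, y 2, y 3)) (g₄ (y 4, y 5)) (g₅ (y 6)) (y 0) (y 0)⁻¹ z) := by
  rw [frame_apply, frame_apply]
  funext i
  fin_cases i <;>
    simp only [Kop7, Kmat7, normalOp, LinearMap.coe_toContinuousLinearMap', Matrix.toLin'_apply,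
        Matrix.mulVec, dotProduct, Fin.sum_univ_succ, Matrix.of_apply, Fin.zero_eta, Fin.mk_one,
        Fin.reduceFinMk, Fin.succ_zero_eq_one, Fin.reduceSucc, Matrix.cons_val,
        Finset.univ_eq_empty, Finset.sum_empty] <;> ring

theorem differentiableAt_Kop7 (hg₁ : ContDiff ℝ (⊤ : ℕ∞) g₁) (hg₂ : ContDiff ℝ (⊤ : ℕ∞) g₂)
    (hg₃ : ContDiff ℝ (⊤ : ℕ∞) g₃) (hg₄ : ContDiff ℝ (⊤ : ℕ∞) g₄)
    (hg₅ : ContDiff ℝ (⊤ : ℕ∞) g₅) {x : Vec 7} (hx : x 0 ≠ 0) :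
    DifferentiableAt ℝ (Kop7 g₁ g₂ g₃ g₄ g₅) x := by
  have hne : ∀ y ∈ {y : Vec 7 | y 0 ≠ 0}, y 0 ≠ 0 := fun y hy => hy
  have hK : ContDiffOn ℝ (⊤ : ℕ∞) (Kop7 g₁ g₂ g₃ g₄ g₅) {y : Vec 7 | y 0 ≠ 0} := by
    refine contDiffOn_clm_apply.2 fun u => contDiffOn_pi.2 fun i => ?_
    fin_cases i <;> simp only [Kop7, Kmat7, LinearMap.coe_toContinuousLinearMap',
        Matrix.toLin'_apply, Matrix.mulVec, dotProduct, Fin.sum_univ_succ, Matrix.of_apply,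
        Fin.zero_eta, Fin.mk_one, Fin.reduceFinMk, Fin.succ_zero_eq_one, Fin.reduceSucc,
        Matrix.cons_val, Finset.univ_eq_empty, Finset.sum_empty] <;>
      fun_prop (disch := assumption)
  exact (hK.differentiableOn (by simp)).differentiableAt
    ((isOpen_ne_fun (continuous_apply 0) continuous_const).mem_nhds hx)

theorem fderiv_Kop7_frame (hg₁ : ContDiff ℝ (⊤ : ℕ∞) g₁) (hg₂ : ContDiff ℝ (⊤ : ℕ∞) g₂)
    (hg₃ : ContDiff ℝ (⊤ : ℕ∞) g₃) (hg₄ : ContDiff ℝ (⊤ : ℕ∞) g₄)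
    (hg₅ : ContDiff ℝ (⊤ : ℕ∞) g₅) {x : Vec 7} (hx : x 0 ≠ 0) (h z : Vec 7) :
    fderiv ℝ (Kop7 g₁ g₂ g₃ g₄ g₅) x (frame h) (frame z) =
      frame (normalOpDeriv (-(x 0 ^ 2)⁻¹)
        (fun k => fderiv ℝ (fun y => g₁ (y 0, y 1, y 2, y 3)) x (frame k))
        (fun k => fderiv ℝ (fun y => g₂ (y 0, y 1, y 2, y 3)) x (frame k))
        (fun k => fderiv ℝ (fun y => g₃ (y 0, y 1, y 2, y 3)) x (frame k))
        (fun k => fderiv ℝ (fun y => g₄ (y 4, y 5)) x (frame k))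
        (fun k => fderiv ℝ (fun y => g₅ (y 6)) x (frame k)) h z) := by
  have d₁ : Differentiable ℝ g₁ := hg₁.differentiable (by simp)
  have d₂ : Differentiable ℝ g₂ := hg₂.differentiable (by simp)
  have d₃ : Differentiable ℝ g₃ := hg₃.differentiable (by simp)
  have d₄ : Differentiable ℝ g₄ := hg₄.differentiable (by simp)
  have d₅ : Differentiable ℝ g₅ := hg₅.differentiable (by simp)
  obtain ⟨L, hL, hL_apply⟩ := hasFDerivAt_normalOp
    (show DifferentiableAt ℝ (fun y : Vec 7 => g₁ (y 0, y 1, y 2, y 3)) x by fun_prop).hasFDerivAt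
    (show DifferentiableAt ℝ (fun y : Vec 7 => g₂ (y 0, y 1, y 2, y 3)) x by fun_prop).hasFDerivAt
    (show DifferentiableAt ℝ (fun y : Vec 7 => g₃ (y 0, y 1, y 2, y 3)) x by fun_prop).hasFDerivAt
    (show DifferentiableAt ℝ (fun y : Vec 7 => g₄ (y 4, y 5)) x by fun_prop).hasFDerivAt
    (show DifferentiableAt ℝ (fun y : Vec 7 => g₅ (y 6)) x by fun_prop).hasFDerivAt hx z
  have hK := (differentiableAt_Kop7 hg₁ hg₂ hg₃ hg₄ hg₅ hx).hasFDerivAt.clm_apply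
    (hasFDerivAt_const (frame z) x)
  simp only [Kop7_frame] at hK
  have hK_apply := congrArg (· (frame h)) (hK.unique (frame.hasFDerivAt.comp x hL))
  simp only [ContinuousLinearMap.comp_zero, zero_add, ContinuousLinearMap.flip_apply,
    ContinuousLinearMap.comp_apply] at hK_apply
  rw [hK_apply, hL_apply]
  simp [normalOpDeriv, frame_apply]

end Kop7

/-- the level-4 generalized Nijenhuis torsion of the operator field K
vanishes identically on U = {x ∈ ℝ⁷ : x₁ ≠ 0}. -/
theorem level4_torsion_Kop7_vanishes
    (g₁ g₂ g₃ : ℝ × ℝ × ℝ × ℝ → ℝ) (g₄ : ℝ × ℝ → ℝ) (g₅ : ℝ → ℝ)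
    (hg₁ : ContDiff ℝ (⊤ : ℕ∞) g₁) (hg₂ : ContDiff ℝ (⊤ : ℕ∞) g₂)
    (hg₃ : ContDiff ℝ (⊤ : ℕ∞) g₃) (hg₄ : ContDiff ℝ (⊤ : ℕ∞) g₄)
    (hg₅ : ContDiff ℝ (⊤ : ℕ∞) g₅) :
    ∀ X Y : VF 7,
      ContDiffOn ℝ (⊤ : ℕ∞) X {x : Vec 7 | x 0 ≠ 0} →
      ContDiffOn ℝ (⊤ : ℕ∞) Y {x : Vec 7 | x 0 ≠ 0} →
      ∀ x ∈ {x : Vec 7 | x 0 ≠ 0},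
        genTorsion (Kop7 g₁ g₂ g₃ g₄ g₅) 4 X Y x = 0 := by
  intro X Y hX hY x hx
  have hU : {x : Vec 7 | x 0 ≠ 0} ∈ nhds x :=
    (isOpen_ne_fun (continuous_apply 0) continuous_const).mem_nhds hx
  rw [genTorsion_succ_apply (differentiableAt_Kop7 hg₁ hg₂ hg₃ hg₄ hg₅ hx) 3
    ((hX.differentiableOn (by simp)).differentiableAt hU)
    ((hY.differentiableOn (by simp)).differentiableAt hU)]
  obtain ⟨u, hu⟩ := frame_surjective (X x)
  obtain ⟨v, hv⟩ := frame_surjective (Y x)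
  rw [← hu, ← hv, iterate_torsionStep_map frame (Kop7_frame x)
    (nijenhuisForm_map frame (Kop7_frame x) (fderiv_Kop7_frame hg₁ hg₂ hg₃ hg₄ hg₅ hx)),
    iterate_three_torsionStep_normalOp, Pi.zero_apply, Pi.zero_apply, map_zero]
end
end
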